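/- Let K be a field, q ∈ K, and A a finite-dimensional q-generalized flexible algebra over K with product ·, and suppose the dual space A* carries a q-generalized flexible algebra product ∘. Let L·*, R·* : A → End_K(A*) be the transposes of left and right multiplication by ·, and L∘*, R∘* : A* → End_K(A) the transposes of left and right multiplication by ∘. Define the product ⋆ on A ⊕ A* by (x+a) ⋆ (y+b) := (x·y + R∘*(a)y + L∘*(b)x) + (a∘b + R·*(x)b + L·*(y)a), and the symmetric bilinear form 𝔅 on A ⊕ A* by 𝔅(x+a, y+b) := ⟨x, b⟩ + ⟨y, a⟩, where ⟨,⟩ is the natural pairing between A and A*. Then 𝔅 is invariant with respect to ⋆: for all x, y, z ∈ A and a, b, c ∈ A*, 𝔅((x+a) ⋆ (y+b), z+c) = 𝔅(x+a, (y+b) ⋆ (z+c)). -/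
import Mathlib


open Module

/-- The transpose `L∘*` on `A` of the left multiplication of a product on the dual
space `A*`, using the canonical identification `A ≃ (A*)*`. -/
noncomputable def Lcirc {K A : Type*} [Field K] [AddCommGroup A] [Module K A]
    [FiniteDimensional K A]
    (mulD : Dual K A →ₗ[K] Dual K A →ₗ[K] Dual K A) (a : Dual K A) : A →ₗ[K] A :=
  (Module.evalEquiv K A).symm.toLinearMap ∘ₗ (mulD a).dualMap
    ∘ₗ (Module.evalEquiv K A).toLinearMap

/-- The transpose `R∘*` on `A` of the right multiplication of a product on the dual
space `A*`, using the canonical identification `A ≃ (A*)*`. -/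
noncomputable def Rcirc {K A : Type*} [Field K] [AddCommGroup A] [Module K A]
    [FiniteDimensional K A]
    (mulD : Dual K A →ₗ[K] Dual K A →ₗ[K] Dual K A) (a : Dual K A) : A →ₗ[K] A :=
  (Module.evalEquiv K A).symm.toLinearMap ∘ₗ (mulD.flip a).dualMap
    ∘ₗ (Module.evalEquiv K A).toLinearMap

/-- The product `⋆` on `A ⊕ A*`:
`(x+a) ⋆ (y+b) := (x·y + R∘*(a)y + L∘*(b)x) + (a∘b + R·*(x)b + L·*(y)a)`. -/
noncomputable def starMul {K A : Type*} [Field K] [AddCommGroup A] [Module K A]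
    [FiniteDimensional K A]
    (mul : A →ₗ[K] A →ₗ[K] A) (mulD : Dual K A →ₗ[K] Dual K A →ₗ[K] Dual K A) :
    A × Dual K A → A × Dual K A → A × Dual K A :=
  fun p₁ p₂ =>
    (mul p₁.1 p₂.1 + Rcirc mulD p₁.2 p₂.1 + Lcirc mulD p₂.2 p₁.1,
     mulD p₁.2 p₂.2 + (mul.flip p₁.1).dualMap p₂.2 + (mul p₂.1).dualMap p₁.2)

/-- The symmetric bilinear form `𝔅(x+a, y+b) := ⟨x, b⟩ + ⟨y, a⟩` on `A ⊕ A*`. -/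
def bForm {K A : Type*} [Field K] [AddCommGroup A] [Module K A]
    (p₁ p₂ : A × Dual K A) : K :=
  p₂.2 p₁.1 + p₁.2 p₂.1


lemma apply_evalEquiv_symm {K A : Type*} [Field K] [AddCommGroup A] [Module K A]
    [FiniteDimensional K A] (f : Dual K (Dual K A)) (c : Dual K A) :
    c ((Module.evalEquiv K A).symm f) = f c := by
  have h := (Module.evalEquiv K A).apply_symm_apply f
  calc c ((Module.evalEquiv K A).symm f)
      = Module.evalEquiv K A ((Module.evalEquiv K A).symm f) c := rfl
    _ = f c := by rw [h]

/-- for a finite-dimensional `q`-generalized flexible algebra `(A,·)` whose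
dual `A*` carries a `q`-generalized flexible product `∘`, the form `𝔅` is invariant with
respect to the product `⋆` on `A ⊕ A*`:
`𝔅((x+a) ⋆ (y+b), z+c) = 𝔅(x+a, (y+b) ⋆ (z+c))`. -/
theorem stmt16 {K A : Type*} [Field K] [AddCommGroup A] [Module K A]
    [FiniteDimensional K A]
    (q : K) (mul : A →ₗ[K] A →ₗ[K] A)
    (mulD : Dual K A →ₗ[K] Dual K A →ₗ[K] Dual K A)
    (hflex : ∀ x y z : A,
      mul (mul x y) z - mul x (mul y z) = q • (mul (mul z y) x - mul z (mul y x)))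
    (hflexD : ∀ a b c : Dual K A,
      mulD (mulD a b) c - mulD a (mulD b c) = q • (mulD (mulD c b) a - mulD c (mulD b a))) :
    ∀ p₁ p₂ p₃ : A × Dual K A,
      bForm (starMul mul mulD p₁ p₂) p₃ = bForm p₁ (starMul mul mulD p₂ p₃) := by
  intro p₁ p₂ p₃
  obtain ⟨x, a⟩ := p₁; obtain ⟨y, b⟩ := p₂; obtain ⟨z, c⟩ := p₃
  simp only [bForm, starMul, Lcirc, Rcirc, LinearMap.coe_comp, LinearEquiv.coe_coe,
    Function.comp_apply, map_add, LinearMap.add_apply, LinearMap.dualMap_apply,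
    LinearMap.flip_apply, apply_evalEquiv_symm, Module.evalEquiv_toLinearMap,
    Module.Dual.eval_apply]
  ring
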